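/- arXiv:1908.06753 — 5 statements merged into one kernel-verified Lean document; each statement's English description precedes it below -/
import Mathlib

section
/- Let p and q be free polynomials in d variables that are homogeneous of degrees j and k respectively. Then the H² norm of the product pq equals the product of the H² norms: ‖pq‖_{H²} = ‖p‖_{H²} · ‖q‖_{H²}. (In particular, a finite product of homogeneous free polynomials each of H² norm 1 again has H² norm 1.) -/
noncomputable def l2opNorm {m n : Type*} [Fintype m] [Fintype n] [DecidableEq n]
    (A : Matrix m n ℂ) : ℝ :=
  ‖LinearMap.toContinuousLinearMap (Matrix.toEuclideanLin A)‖

abbrev FreePoly (d : ℕ) := MonoidAlgebra ℂ (FreeMonoid (Fin d))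

noncomputable def freeEval {d n : ℕ} (X : Fin d → Matrix (Fin n) (Fin n) ℂ) :
    FreePoly d →ₐ[ℂ] Matrix (Fin n) (Fin n) ℂ :=
  MonoidAlgebra.lift ℂ (Matrix (Fin n) (Fin n) ℂ) (FreeMonoid (Fin d)) (FreeMonoid.lift X)

noncomputable def h2Norm {d : ℕ} (p : FreePoly d) : ℝ :=
  Real.sqrt (∑ w ∈ p.coeff.support, ‖p.coeff w‖ ^ 2)

noncomputable def rowNorm {d n : ℕ} (X : Fin d → Matrix (Fin n) (Fin n) ℂ) : ℝ :=
  l2opNorm (Matrix.of fun (i : Fin n) (p : Fin d × Fin n) => X p.1 i p.2)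

noncomputable def matEval {d n a b : ℕ} (δ : Matrix (Fin a) (Fin b) (FreePoly d))
    (X : Fin d → Matrix (Fin n) (Fin n) ℂ) : Matrix (Fin a × Fin n) (Fin b × Fin n) ℂ :=
  Matrix.of fun p q => freeEval X (δ p.1 q.1) p.2 q.2

/-!
If every word in the support of `p` has the same length, a word `w = u * v` with `u` in the
support of `p` and `v` in that of `q` determines `u` (its prefix of that length) and `v`. So the
coefficients of `p * q` are exactly the products `p u * q v`, each occurring once, and the sum of
their squared moduli factors as the product of the two sums.
-/

theorem FreeMonoid.mul_inj_of_length_eq {α : Type*} {a b a' b' : FreeMonoid α}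
    (hlen : a.length = a'.length) (h : a * b = a' * b') : a = a' ∧ b = b' := by
  obtain ⟨ha, hb⟩ := List.append_inj (congrArg FreeMonoid.toList h) hlen
  exact ⟨FreeMonoid.toList.injective ha, FreeMonoid.toList.injective hb⟩

namespace MonoidAlgebra

open scoped Pointwise

variable {R M : Type*} [SeminormedRing R] [NormMulClass R] [Mul M]

theorem sum_norm_sq_coeff_mul_of_uniqueMul {f g : MonoidAlgebra R M}
    (huniq : ∀ a ∈ f.coeff.support, ∀ b ∈ g.coeff.support,
      UniqueMul f.coeff.support g.coeff.support a b) :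
    ∑ w ∈ (f * g).coeff.support, ‖(f * g).coeff w‖ ^ 2 =
      (∑ a ∈ f.coeff.support, ‖f.coeff a‖ ^ 2) * ∑ b ∈ g.coeff.support, ‖g.coeff b‖ ^ 2 := by
  classical
  have hinj : Set.InjOn (fun x : M × M => x.1 * x.2) ↑(f.coeff.support ×ˢ g.coeff.support) := by
    rintro ⟨a, b⟩ hab ⟨a', b'⟩ hab' he
    simp only [Finset.coe_product, Set.mem_prod, Finset.mem_coe] at hab hab'
    obtain ⟨rfl, rfl⟩ := huniq a' hab'.1 b' hab'.2 hab.1 hab.2 he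
    rfl
  calc ∑ w ∈ (f * g).coeff.support, ‖(f * g).coeff w‖ ^ 2
      = ∑ w ∈ f.coeff.support * g.coeff.support, ‖(f * g).coeff w‖ ^ 2 :=
        Finset.sum_subset (support_coeff_mul_subset f g) fun w _ hw => by
          rw [Finsupp.notMem_support_iff.mp hw, norm_zero, sq, mul_zero]
    _ = ∑ x ∈ f.coeff.support ×ˢ g.coeff.support, ‖(f * g).coeff (x.1 * x.2)‖ ^ 2 := by
        rw [← Finset.image_mul_product, Finset.sum_image hinj]
    _ = ∑ x ∈ f.coeff.support ×ˢ g.coeff.support, ‖f.coeff x.1‖ ^ 2 * ‖g.coeff x.2‖ ^ 2 := by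
        refine Finset.sum_congr rfl fun x hx => ?_
        obtain ⟨ha, hb⟩ := Finset.mem_product.mp hx
        rw [coeff_mul_mul_of_uniqueMul (huniq _ ha _ hb), norm_mul, mul_pow]
    _ = _ := by rw [Finset.sum_mul_sum, Finset.sum_product]

end MonoidAlgebra

theorem stmt2_general (d j : ℕ) (p q : FreePoly d)
    (hp : ∀ w ∈ p.coeff.support, FreeMonoid.length w = j) :
    h2Norm (p * q) = h2Norm p * h2Norm q := by
  have huniq : ∀ u ∈ p.coeff.support, ∀ v ∈ q.coeff.support,
      UniqueMul p.coeff.support q.coeff.support u v :=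
    fun u hu _ _ _ _ hu' _ he => FreeMonoid.mul_inj_of_length_eq (by rw [hp _ hu', hp _ hu]) he
  rw [h2Norm, h2Norm, h2Norm, MonoidAlgebra.sum_norm_sq_coeff_mul_of_uniqueMul huniq,
    Real.sqrt_mul (by positivity)]

/-- The H² norm is multiplicative on products of homogeneous free polynomials. -/
theorem stmt2 (d j k : ℕ) (p q : FreePoly d)
    (hp : ∀ w ∈ p.coeff.support, FreeMonoid.length w = j)
    (hq : ∀ w ∈ q.coeff.support, FreeMonoid.length w = k) :
    h2Norm (p * q) = h2Norm p * h2Norm q :=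
  stmt2_general d j p q hp
end

section
/- For every free polynomial p in d variables, the H² norm of p is at most the supremum of ‖p(X)‖ over all strict row contractions X: ‖p‖_{H²} ≤ sup { ‖p(X)‖ : X ∈ C^d }. -/
/-! Truncate the free shift: on the span of the words of length at most `L`, the weighted left
creation operators `X_i : e_v ↦ r e_{iv}` have orthogonal ranges, so `X` is a row contraction of
norm at most `r < 1`. Applied to the empty word, `p(X)` gives `∑ p_w r^{|w|} e_w`, whose norm is at
least `r^L ‖p‖_{H²}` once `L` bounds the degree of `p`; then let `r → 1`. -/

open Filter Topology

theorem norm_sum_sq_eq_of_subsingleton {ι E : Type*} [Fintype ι] [SeminormedAddCommGroup E]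
    (f : ι → E) (hf : {i | f i ≠ 0}.Subsingleton) :
    ‖∑ i, f i‖ ^ 2 = ∑ i, ‖f i‖ ^ 2 := by
  by_cases h : ∃ i, f i ≠ 0
  · obtain ⟨i, hi⟩ := h
    have hzero : ∀ j, j ≠ i → f j = 0 := fun j hj => by_contra fun hj' => hj (hf hj' hi)
    rw [Fintype.sum_eq_single i hzero, Fintype.sum_eq_single i fun j hj => by simp [hzero j hj]]
  · push Not at h
    simp [h]

section L2OpNorm

variable {m k : Type*} [Fintype m] [Fintype k] [DecidableEq k]

theorem sum_norm_sq_le_l2opNorm_sq (A : Matrix m k ℂ) (q : k) :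
    ∑ a, ‖A a q‖ ^ 2 ≤ l2opNorm A ^ 2 := by
  have h := (LinearMap.toContinuousLinearMap (Matrix.toEuclideanLin A)).le_opNorm
    (EuclideanSpace.single q 1)
  simp only [LinearMap.coe_toContinuousLinearMap', PiLp.norm_single, norm_one,
    mul_one] at h
  have hcol : ‖Matrix.toEuclideanLin A (EuclideanSpace.single q 1)‖ ^ 2 = ∑ a, ‖A a q‖ ^ 2 := by
    rw [EuclideanSpace.norm_eq, Real.sq_sqrt (by positivity)]
    simp [Matrix.toLpLin_apply]
  rw [← hcol]
  exact pow_le_pow_left₀ (norm_nonneg _) h 2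

theorem l2opNorm_le_of_rows_subsingleton (A : Matrix m k ℂ) {c : ℝ} (hc : 0 ≤ c)
    (hrow : ∀ a, {q | A a q ≠ 0}.Subsingleton) (hcol : ∀ q, ∑ a, ‖A a q‖ ^ 2 ≤ c ^ 2) :
    l2opNorm A ≤ c := by
  refine ContinuousLinearMap.opNorm_le_bound _ hc fun v => ?_
  refine (sq_le_sq₀ (norm_nonneg _) (by positivity)).mp ?_
  have hentry : ∀ a, {q | A a q * v q ≠ 0}.Subsingleton := fun a =>
    (hrow a).anti fun q hq => left_ne_zero_of_mul hq
  calc ‖Matrix.toEuclideanLin A v‖ ^ 2 = ∑ a, ∑ q, ‖A a q‖ ^ 2 * ‖v q‖ ^ 2 := by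
        rw [EuclideanSpace.norm_eq, Real.sq_sqrt (by positivity)]
        simp only [Matrix.toLpLin_apply, Matrix.mulVec, dotProduct,
          norm_sum_sq_eq_of_subsingleton _ (hentry _), norm_mul, mul_pow]
    _ = ∑ q, (∑ a, ‖A a q‖ ^ 2) * ‖v q‖ ^ 2 := by
        rw [Finset.sum_comm]; simp only [Finset.sum_mul]
    _ ≤ ∑ q, c ^ 2 * ‖v q‖ ^ 2 := by gcongr with q; exact hcol q
    _ = (c * ‖v‖) ^ 2 := by
        rw [← Finset.mul_sum, mul_pow, EuclideanSpace.norm_eq, Real.sq_sqrt (by positivity)]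

end L2OpNorm

namespace Finset

variable {α : Type*} (S : Finset α)

noncomputable def enum (a : Fin S.card) : α := S.equivFin.symm a

theorem enum_mem (a : Fin S.card) : S.enum a ∈ S :=
  (S.equivFin.symm a).2

theorem enum_injective : Function.Injective S.enum :=
  Subtype.val_injective.comp S.equivFin.symm.injective

@[simp]
theorem enum_equivFin {w : α} (hw : w ∈ S) : S.enum (S.equivFin ⟨w, hw⟩) = w := by
  simp [enum]

theorem sum_enum {M : Type*} [AddCommMonoid M] (f : α → M) :
    ∑ a, f (S.enum a) = ∑ w ∈ S, f w :=
  (S.equivFin.symm.sum_comp fun w => f w).trans (S.sum_coe_sort f)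

end Finset

instance {α : Type*} [DecidableEq α] : DecidableEq (FreeMonoid α) :=
  inferInstanceAs (DecidableEq (List α))

section CompressedShift

variable {d : ℕ} (S : Finset (FreeMonoid (Fin d)))

/-- The left creation operators `e_v ↦ r e_{iv}` on the span of the words, compressed to the
span of `S`. -/
noncomputable def compressedShift (r : ℝ) (i : Fin d) : Matrix (Fin S.card) (Fin S.card) ℂ :=
  Matrix.of fun a b => if S.enum a = .of i * S.enum b then (r : ℂ) else 0

variable {S}

theorem freeEval_of_of {n : ℕ} (X : Fin d → Matrix (Fin n) (Fin n) ℂ) (i : Fin d) :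
    freeEval X (MonoidAlgebra.of ℂ _ (.of i)) = X i := by
  simp [freeEval]

theorem freeEval_compressedShift_of (hS : ∀ u v, u * v ∈ S → v ∈ S) (r : ℝ)
    (w : FreeMonoid (Fin d)) (a b : Fin S.card) :
    freeEval (compressedShift S r) (MonoidAlgebra.of ℂ _ w) a b =
      if S.enum a = w * S.enum b then (r : ℂ) ^ w.length else 0 := by
  induction w using FreeMonoid.recOn generalizing a with
  | one =>
    rw [map_one, map_one, Matrix.one_apply]
    simp [S.enum_injective.eq_iff]
  | of_mul i w ih =>
    rw [map_mul, map_mul, Matrix.mul_apply]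
    simp only [ih, freeEval_of_of, compressedShift, Matrix.of_apply]
    set v := w * S.enum b
    calc ∑ c, (if S.enum a = .of i * S.enum c then (r : ℂ) else 0) *
            (if S.enum c = v then (r : ℂ) ^ w.length else 0)
        = ∑ c, if S.enum c = v then
            (if S.enum a = .of i * v then (r : ℂ) * r ^ w.length else 0) else 0 := by
          refine Fintype.sum_congr _ _ fun c => ?_
          split_ifs <;> simp_all
      _ = if S.enum a = .of i * w * S.enum b then (r : ℂ) ^ (.of i * w : FreeMonoid _).length
            else 0 := by
          rw [S.sum_enum fun u => if u = v then _ else 0, Finset.sum_ite_eq', mul_assoc,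
            FreeMonoid.length_mul, FreeMonoid.length_of, pow_add, pow_one]
          by_cases h : S.enum a = .of i * v
          · rw [if_pos h, if_pos (hS _ _ (h ▸ S.enum_mem a))]
          · rw [if_neg h, ite_self]

theorem freeEval_compressedShift_apply_of_enum_eq_one (hS : ∀ u v, u * v ∈ S → v ∈ S) (r : ℝ)
    (p : FreePoly d) {a b : Fin S.card} (hb : S.enum b = 1) :
    freeEval (compressedShift S r) p a b = p.coeff (S.enum a) * (r : ℂ) ^ (S.enum a).length := by
  induction p using MonoidAlgebra.induction_on with
  | of w =>
    rw [freeEval_compressedShift_of hS, hb, mul_one]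
    by_cases h : w = S.enum a <;> simp [h, eq_comm]
  | add p q hp hq => simp [hp, hq, add_mul]
  | smul c p hp => simp [hp, mul_assoc]

theorem rowNorm_compressedShift_le (r : ℝ) : rowNorm (compressedShift S r) ≤ |r| := by
  refine l2opNorm_le_of_rows_subsingleton _ (abs_nonneg r) (fun a q hq q' hq' => ?_) fun q => ?_
  · simp only [compressedShift, Set.mem_ofPred_eq, Matrix.of_apply, ne_eq, ite_eq_right_iff,
      not_forall] at hq hq'
    obtain ⟨h1, h2⟩ := List.cons_eq_cons.mp (hq.1.symm.trans hq'.1)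
    exact Prod.ext h1 (S.enum_injective h2)
  · calc ∑ a, ‖compressedShift S r q.1 a q.2‖ ^ 2
        = ∑ a, if S.enum a = .of q.1 * S.enum q.2 then |r| ^ 2 else 0 := by
          simp [compressedShift, apply_ite]
      _ ≤ |r| ^ 2 := by
          rw [S.sum_enum fun u => if u = _ then _ else 0, Finset.sum_ite_eq']
          split_ifs
          exacts [le_rfl, by positivity]

theorem sum_norm_sq_mul_le_l2opNorm_sq (hS : ∀ u v, u * v ∈ S → v ∈ S) (h1 : 1 ∈ S) (r : ℝ)
    {p : FreePoly d} (hp : p.coeff.support ⊆ S) :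
    ∑ w ∈ p.coeff.support, ‖p.coeff w‖ ^ 2 * (r ^ 2) ^ w.length ≤
      l2opNorm (freeEval (compressedShift S r) p) ^ 2 :=
  calc ∑ w ∈ p.coeff.support, ‖p.coeff w‖ ^ 2 * (r ^ 2) ^ w.length
      ≤ ∑ w ∈ S, ‖p.coeff w‖ ^ 2 * (r ^ 2) ^ w.length :=
        Finset.sum_le_sum_of_subset_of_nonneg hp fun _ _ _ => by positivity
    _ = ∑ a, ‖freeEval (compressedShift S r) p a (S.equivFin ⟨1, h1⟩)‖ ^ 2 := by
        rw [← S.sum_enum]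
        refine Fintype.sum_congr _ _ fun a => ?_
        rw [freeEval_compressedShift_apply_of_enum_eq_one hS r p (S.enum_equivFin h1), norm_mul,
          norm_pow, Complex.norm_real, Real.norm_eq_abs, mul_pow, pow_right_comm |r|, sq_abs]
    _ ≤ _ := sum_norm_sq_le_l2opNorm_sq _ _

end CompressedShift

noncomputable def wordsLengthLE (d L : ℕ) : Finset (FreeMonoid (Fin d)) :=
  (List.finite_length_le (Fin d) L).toFinset

theorem mem_wordsLengthLE {d L : ℕ} {w : FreeMonoid (Fin d)} :
    w ∈ wordsLengthLE d L ↔ w.length ≤ L :=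
  Set.Finite.mem_toFinset _

theorem pow_mul_h2Norm_le_l2opNorm {d L : ℕ} {p : FreePoly d}
    (hL : ∀ w ∈ p.coeff.support, w.length ≤ L) {r : ℝ} (hr0 : 0 ≤ r) (hr1 : r ≤ 1) :
    r ^ L * h2Norm p ≤ l2opNorm (freeEval (compressedShift (wordsLengthLE d L) r) p) := by
  have hS : ∀ u v, u * v ∈ wordsLengthLE d L → v ∈ wordsLengthLE d L := fun u v huv => by
    rw [mem_wordsLengthLE, FreeMonoid.length_mul] at *
    omega
  have h1 : 1 ∈ wordsLengthLE d L := by simp [mem_wordsLengthLE]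
  have hp : p.coeff.support ⊆ wordsLengthLE d L := fun w hw => mem_wordsLengthLE.mpr (hL w hw)
  calc r ^ L * h2Norm p = √((r ^ 2) ^ L * ∑ w ∈ p.coeff.support, ‖p.coeff w‖ ^ 2) := by
        rw [h2Norm, Real.sqrt_mul (by positivity), ← pow_mul, mul_comm 2, pow_mul,
          Real.sqrt_sq (by positivity)]
    _ ≤ √(∑ w ∈ p.coeff.support, ‖p.coeff w‖ ^ 2 * (r ^ 2) ^ w.length) := by
        rw [Finset.mul_sum]
        refine Real.sqrt_le_sqrt (Finset.sum_le_sum fun w hw => ?_)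
        rw [mul_comm]
        exact mul_le_mul_of_nonneg_left
          (pow_le_pow_of_le_one (by positivity) (pow_le_one₀ hr0 hr1) (hL w hw)) (by positivity)
    _ ≤ √(l2opNorm (freeEval (compressedShift (wordsLengthLE d L) r) p) ^ 2) :=
        Real.sqrt_le_sqrt (sum_norm_sq_mul_le_l2opNorm_sq hS h1 r hp)
    _ = _ := Real.sqrt_sq (norm_nonneg _)

/-- The H² norm of a free polynomial is dominated by its sup norm over the
row ball (the supremum, possibly infinite, is taken in ℝ≥0∞). -/
theorem stmt3 (d : ℕ) (p : FreePoly d) :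
    ENNReal.ofReal (h2Norm p) ≤
      ⨆ (n : ℕ) (X : Fin d → Matrix (Fin n) (Fin n) ℂ) (_ : rowNorm X < 1),
        ENNReal.ofReal (l2opNorm (freeEval X p)) := by
  set L := p.coeff.support.sup FreeMonoid.length
  have hL : ∀ w ∈ p.coeff.support, w.length ≤ L := fun w hw => Finset.le_sup hw
  have hbound : ∀ r ∈ Set.Ioo (0 : ℝ) 1, ENNReal.ofReal (r ^ L * h2Norm p) ≤
      ⨆ (n : ℕ) (X : Fin d → Matrix (Fin n) (Fin n) ℂ) (_ : rowNorm X < 1),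
        ENNReal.ofReal (l2opNorm (freeEval X p)) := by
    rintro r ⟨hr0, hr1⟩
    have hrow : rowNorm (compressedShift (wordsLengthLE d L) r) < 1 :=
      (rowNorm_compressedShift_le r).trans_lt (by rwa [abs_of_pos hr0])
    refine le_iSup_of_le _ (le_iSup_of_le _ (le_iSup_of_le hrow ?_))
    exact ENNReal.ofReal_le_ofReal (pow_mul_h2Norm_le_l2opNorm hL hr0.le hr1.le)
  have hlim : Tendsto (fun r : ℝ => ENNReal.ofReal (r ^ L * h2Norm p)) (𝓝[<] 1)
      (𝓝 (ENNReal.ofReal (h2Norm p))) := by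
    have h : Continuous fun r : ℝ => r ^ L * h2Norm p := by fun_prop
    simpa using (ENNReal.tendsto_ofReal (h.tendsto 1)).mono_left nhdsWithin_le_nhds
  exact le_of_tendsto hlim (eventually_of_mem (Ioo_mem_nhdsLT one_pos) hbound)
end

section
/- Let d ≥ 2. For each n ≥ 1, let p_n be a free polynomial in d variables, homogeneous of degree e_n ≥ 1, such that sup { ‖p_n(X)‖ : X ∈ C^d } ≤ 1. For k ≥ 1 define q_k = ∏_{n≥1} p_n^{⌊k/(2^n e_n)⌋} (a finite product, since the exponent is 0 once 2^n > k). Fix r ≥ 1 and m ≥ 1, set D = 2^m e_m, and let X be a d-tuple of square complex matrices (of any size) such that the block row matrix [X₁ … X_d] has norm at most r and ‖p_m(X)‖ ≤ (2r)^{-D}. Then for every k ≥ 1, ‖q_k(X)‖ ≤ r^D · 2^{D-k}. In particular Σ_{k≥1} ‖q_k(X)‖ ≤ r^D · 2^D. -/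
/-- q_k = ∏_{n≥1} p_n^{⌊k/(2^n e_n)⌋}, written as the (ordered) product over n = 1,…,k;
this is the full product since the exponent vanishes once 2^n > k, in particular for
all n > k. -/
noncomputable def qProd {d : ℕ} (p : ℕ → FreePoly d) (e : ℕ → ℕ) (k : ℕ) : FreePoly d :=
  ((List.range k).map (fun i => p (i + 1) ^ (k / (2 ^ (i + 1) * e (i + 1))))).prod

def FreePoly.IsHomogeneous {d : ℕ} (q : FreePoly d) (e : ℕ) : Prop :=
  ∀ w ∈ q.coeff.support, FreeMonoid.length w = e

open scoped Matrix.Norms.L2Operator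
open Finset Topology

theorem l2opNorm_eq_norm {m n : Type*} [Fintype m] [Fintype n] [DecidableEq n]
    (A : Matrix m n ℂ) : l2opNorm A = ‖A‖ := rfl

theorem Matrix.l2_opNorm_one_le {n 𝕜 : Type*} [RCLike 𝕜] [Fintype n] [DecidableEq n] :
    ‖(1 : Matrix n n 𝕜)‖ ≤ 1 := by
  rw [Matrix.cstar_norm_def, map_one]
  exact ContinuousLinearMap.norm_id_le

theorem List.norm_prod_le_of_norm_one_le {α : Type*} [SeminormedRing α] (h1 : ‖(1 : α)‖ ≤ 1) :
    ∀ l : List α, ‖l.prod‖ ≤ (l.map norm).prod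
  | [] => by simpa using h1
  | a :: l => by
    rw [List.prod_cons, List.map_cons, List.prod_cons]
    exact (norm_mul_le _ _).trans
      (mul_le_mul_of_nonneg_left (List.norm_prod_le_of_norm_one_le h1 l) (norm_nonneg a))

theorem norm_pow_le_of_norm_one_le {α : Type*} [SeminormedRing α] (h1 : ‖(1 : α)‖ ≤ 1) (a : α) :
    ∀ n : ℕ, ‖a ^ n‖ ≤ ‖a‖ ^ n
  | 0 => by simpa using h1
  | n + 1 => norm_pow_le' a n.succ_pos

theorem FreeMonoid.lift_smul_apply {α R A : Type*} [CommSemiring R] [Semiring A] [Algebra R A]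
    (c : R) (X : α → A) (w : FreeMonoid α) :
    FreeMonoid.lift (c • X) w = c ^ w.length • FreeMonoid.lift X w := by
  induction w using FreeMonoid.recOn with
  | one => simp
  | of_mul x w ih =>
    rw [map_mul, map_mul, ih, FreeMonoid.length_mul, FreeMonoid.length_of, FreeMonoid.lift_eval_of,
      FreeMonoid.lift_eval_of, Pi.smul_apply, smul_mul_smul_comm, pow_add, pow_one]

theorem FreePoly.IsHomogeneous.freeEval_smul {d n e : ℕ} {q : FreePoly d} (hq : q.IsHomogeneous e)
    (c : ℂ) (X : Fin d → Matrix (Fin n) (Fin n) ℂ) :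
    freeEval (c • X) q = c ^ e • freeEval X q := by
  simp only [freeEval, MonoidAlgebra.lift_apply, Finsupp.smul_sum]
  refine Finsupp.sum_congr fun w hw => ?_
  rw [FreeMonoid.lift_smul_apply, hq w hw, smul_comm]

theorem rowNorm_smul {d n : ℕ} (c : ℂ) (X : Fin d → Matrix (Fin n) (Fin n) ℂ) :
    rowNorm (c • X) = ‖c‖ * rowNorm X := by
  have h : (Matrix.of fun (i : Fin n) (p : Fin d × Fin n) => (c • X) p.1 i p.2)
      = c • Matrix.of fun (i : Fin n) (p : Fin d × Fin n) => X p.1 i p.2 := by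
    ext; simp
  rw [rowNorm, h, l2opNorm_eq_norm, norm_smul]
  rfl

theorem FreePoly.IsHomogeneous.norm_freeEval_le_rowNorm_pow {d N e : ℕ} {q : FreePoly d}
    (hq : q.IsHomogeneous e)
    (hbd : ∀ Y : Fin d → Matrix (Fin N) (Fin N) ℂ, rowNorm Y < 1 → l2opNorm (freeEval Y q) ≤ 1)
    (X : Fin d → Matrix (Fin N) (Fin N) ℂ) : ‖freeEval X q‖ ≤ rowNorm X ^ e := by
  have hs : ∀ s : ℝ, rowNorm X < s → ‖freeEval X q‖ ≤ s ^ e := by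
    intro s hXs
    have hs0 : 0 < s := (norm_nonneg _).trans_lt hXs
    have hY : rowNorm ((s : ℂ)⁻¹ • X) < 1 := by
      rw [rowNorm_smul, norm_inv, Complex.norm_real, Real.norm_of_nonneg hs0.le, inv_mul_lt_one₀ hs0]
      exact hXs
    have h := hbd _ hY
    rw [hq.freeEval_smul, l2opNorm_eq_norm, norm_smul, norm_pow, norm_inv, Complex.norm_real,
      Real.norm_of_nonneg hs0.le, inv_pow, inv_mul_le_iff₀ (by positivity), mul_one] at h
    exact h
  exact ge_of_tendsto (x := 𝓝[>] rowNorm X)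
    ((continuous_pow e).tendsto _ |>.mono_left nhdsWithin_le_nhds)
    (eventually_nhdsWithin_of_forall hs)

theorem Nat.sum_range_div_two_pow_succ_le (k K : ℕ) : ∑ i ∈ range K, k / 2 ^ (i + 1) ≤ k := by
  suffices h : ∀ k, ∑ i ∈ range K, k / 2 ^ (i + 1) + k / 2 ^ K ≤ k from
    (Nat.le_add_right _ _).trans (h k)
  induction K with
  | zero => simp
  | succ K ih =>
    intro k
    have h2 := ih (k / 2)
    rw [sum_range_succ']
    simp only [pow_succ', ← Nat.div_div_eq_div_mul, zero_add, pow_zero, mul_one] at h2 ⊢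
    omega

theorem sum_range_mul_div_two_pow_mul_le (e : ℕ → ℕ) (k K : ℕ) :
    ∑ i ∈ range K, e (i + 1) * (k / (2 ^ (i + 1) * e (i + 1))) ≤ k := by
  refine le_trans (sum_le_sum fun i _ => ?_) (Nat.sum_range_div_two_pow_succ_le k K)
  rw [← Nat.div_div_eq_div_mul, mul_comm]
  exact Nat.div_mul_le_self _ _

theorem norm_freeEval_qProd_le_prod {d N : ℕ} (p : ℕ → FreePoly d) (e : ℕ → ℕ) (k : ℕ)
    (X : Fin d → Matrix (Fin N) (Fin N) ℂ) :
    ‖freeEval X (qProd p e k)‖ ≤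
      ∏ i ∈ range k, ‖freeEval X (p (i + 1))‖ ^ (k / (2 ^ (i + 1) * e (i + 1))) := by
  rw [qProd, map_list_prod, List.map_map]
  refine (List.norm_prod_le_of_norm_one_le Matrix.l2_opNorm_one_le _).trans ?_
  rw [List.map_map, show ∀ f : ℕ → ℝ, ((List.range k).map f).prod = ∏ i ∈ range k, f i from
    fun _ => rfl]
  refine prod_le_prod (fun _ _ => norm_nonneg _) fun i _ => ?_
  simpa only [Function.comp_apply, map_pow] using
    norm_pow_le_of_norm_one_le Matrix.l2_opNorm_one_le _ _

section ProductBound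

variable {b : ℕ → ℝ} {r : ℝ} {e : ℕ → ℕ} {k : ℕ}

theorem prod_pow_le_pow_of_subset_range (hb0 : ∀ n, 0 ≤ b n) (hb : ∀ n, b n ≤ r ^ e n) (hr : 1 ≤ r)
    {s : Finset ℕ} (hs : s ⊆ range k) :
    ∏ i ∈ s, b (i + 1) ^ (k / (2 ^ (i + 1) * e (i + 1))) ≤ r ^ k :=
  calc ∏ i ∈ s, b (i + 1) ^ (k / (2 ^ (i + 1) * e (i + 1)))
      ≤ ∏ i ∈ s, r ^ (e (i + 1) * (k / (2 ^ (i + 1) * e (i + 1)))) :=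
        prod_le_prod (fun _ _ => pow_nonneg (hb0 _) _) fun _ _ =>
          (pow_le_pow_left₀ (hb0 _) (hb _) _).trans_eq (pow_mul _ _ _).symm
    _ = r ^ ∑ i ∈ s, e (i + 1) * (k / (2 ^ (i + 1) * e (i + 1))) := prod_pow_eq_pow_sum _ _ _
    _ ≤ r ^ k := pow_le_pow_right₀ hr <|
        (sum_le_sum_of_subset hs).trans (sum_range_mul_div_two_pow_mul_le e k k)

theorem prod_pow_le_pow_mul_pow {c : ℝ} (hb0 : ∀ n, 0 ≤ b n) (hb : ∀ n, b n ≤ r ^ e n) (hr : 1 ≤ r)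
    {m : ℕ} (hm : 1 ≤ m) (hem : 1 ≤ e m) (hbm : b m ≤ c) :
    ∏ i ∈ range k, b (i + 1) ^ (k / (2 ^ (i + 1) * e (i + 1))) ≤
      c ^ (k / (2 ^ m * e m)) * r ^ k := by
  by_cases hmk : m ≤ k
  · rw [← mul_prod_erase _ _ (mem_range.2 (show m - 1 < k by omega)), Nat.sub_add_cancel hm]
    exact mul_le_mul (pow_le_pow_left₀ (hb0 m) hbm _)
      (prod_pow_le_pow_of_subset_range hb0 hb hr (erase_subset _ _))
      (prod_nonneg fun _ _ => pow_nonneg (hb0 _) _) (pow_nonneg ((hb0 m).trans hbm) _)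
  · -- the factor `b m` is absent from the product, but its exponent vanishes as `k < m < 2 ^ m`
    have hkD : k < 2 ^ m * e m :=
      (Nat.lt_of_not_le hmk).trans (Nat.lt_two_pow_self.trans_le (Nat.le_mul_of_pos_right _ hem))
    rw [Nat.div_eq_of_lt hkD, pow_zero, one_mul]
    exact prod_pow_le_pow_of_subset_range hb0 hb hr subset_rfl

end ProductBound

theorem inv_pow_pow_div_mul_pow_le {r : ℝ} (hr : 1 ≤ r) {D : ℕ} (hD : 0 < D) (k : ℕ) :
    ((2 * r) ^ D)⁻¹ ^ (k / D) * r ^ k ≤ r ^ D * 2 ^ ((D : ℤ) - k) := by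
  have h2r : 1 ≤ 2 * r := by linarith
  rw [zpow_sub₀ two_ne_zero, zpow_natCast, zpow_natCast, ← inv_pow, ← pow_mul, inv_pow]
  calc ((2 * r) ^ (D * (k / D)))⁻¹ * r ^ k
        = ((2 * r) ^ (D * (k / D)))⁻¹ * ((2 * r) ^ k / 2 ^ k) := by
        rw [mul_pow]; field_simp; ring
    _ ≤ ((2 * r) ^ (D * (k / D)))⁻¹ * ((2 * r) ^ (D * (k / D) + D) / 2 ^ k) := by
        gcongr
        exact (Nat.lt_mul_div_succ k hD).le
    _ = r ^ D * (2 ^ D / 2 ^ k) := by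
        rw [pow_add, mul_pow 2 r D]; field_simp

theorem tsum_le_of_le_div_two_pow {f : ℕ → ℝ} {c : ℝ} (hf0 : ∀ k, 0 ≤ f k)
    (hf : ∀ k, f k ≤ c / 2 ^ (k + 1)) : ∑' k, f k ≤ c := by
  have hf' : ∀ k, f k ≤ c / 2 / 2 ^ k := fun k => (hf k).trans_eq (by rw [pow_succ']; ring)
  calc ∑' k, f k ≤ ∑' k, c / 2 / 2 ^ k :=
        (summable_geometric_two' c).of_nonneg_of_le hf0 hf' |>.tsum_le_tsum hf'
          (summable_geometric_two' c)
    _ = c := tsum_geometric_two' c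

theorem stmt9_general (d : ℕ) (p : ℕ → FreePoly d) (e : ℕ → ℕ)
    (he : ∀ n, 1 ≤ e n)
    (hhom : ∀ n, ∀ w ∈ (p n).coeff.support, FreeMonoid.length w = e n)
    (hbd : ∀ (n N : ℕ) (Y : Fin d → Matrix (Fin N) (Fin N) ℂ),
        rowNorm Y < 1 → l2opNorm (freeEval Y (p n)) ≤ 1)
    (r : ℝ) (hr : 1 ≤ r) (m : ℕ) (hm : 1 ≤ m)
    (N : ℕ) (X : Fin d → Matrix (Fin N) (Fin N) ℂ) (hX : rowNorm X ≤ r)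
    (hpm : l2opNorm (freeEval X (p m)) ≤ ((2 * r) ^ (2 ^ m * e m))⁻¹) :
    (∀ k : ℕ, 1 ≤ k →
        l2opNorm (freeEval X (qProd p e k)) ≤
          r ^ (2 ^ m * e m) * (2 : ℝ) ^ ((2 ^ m * e m : ℤ) - (k : ℤ))) ∧
      ∑' k : ℕ, l2opNorm (freeEval X (qProd p e (k + 1))) ≤
        r ^ (2 ^ m * e m) * 2 ^ (2 ^ m * e m) := by
  set D := 2 ^ m * e m
  have hpn : ∀ n, ‖freeEval X (p n)‖ ≤ r ^ e n := fun n =>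
    (FreePoly.IsHomogeneous.norm_freeEval_le_rowNorm_pow (hhom n) (hbd n N) X).trans
      (pow_le_pow_left₀ (norm_nonneg _) hX _)
  have hq : ∀ k : ℕ, ‖freeEval X (qProd p e k)‖ ≤ r ^ D * 2 ^ ((D : ℤ) - k) := fun k =>
    (norm_freeEval_qProd_le_prod p e k X).trans <|
      (prod_pow_le_pow_mul_pow (fun _ => norm_nonneg _) hpn hr hm (he m) hpm).trans
        (inv_pow_pow_div_mul_pow_le hr (Nat.mul_pos (Nat.two_pow_pos m) (he m)) k)
  refine ⟨fun k _ => by exact_mod_cast hq k, tsum_le_of_le_div_two_pow (fun _ => norm_nonneg _)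
    fun k => (hq (k + 1)).trans_eq ?_⟩
  rw [zpow_sub₀ two_ne_zero, zpow_natCast, zpow_natCast, mul_div_assoc]

/-- the key estimate.  If each p_n is homogeneous of degree e_n ≥ 1 with
sup norm ≤ 1 on the row ball, r ≥ 1, m ≥ 1, D = 2^m e_m, X has row norm ≤ r and
‖p_m(X)‖ ≤ (2r)^{-D}, then ‖q_k(X)‖ ≤ r^D 2^{D-k} for all k ≥ 1, and
Σ_{k ≥ 1} ‖q_k(X)‖ ≤ r^D 2^D. -/
theorem stmt9 (d : ℕ) (hd : 2 ≤ d) (p : ℕ → FreePoly d) (e : ℕ → ℕ)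
    (he : ∀ n, 1 ≤ e n)
    (hhom : ∀ n, ∀ w ∈ (p n).coeff.support, FreeMonoid.length w = e n)
    (hbd : ∀ (n N : ℕ) (Y : Fin d → Matrix (Fin N) (Fin N) ℂ),
        rowNorm Y < 1 → l2opNorm (freeEval Y (p n)) ≤ 1)
    (r : ℝ) (hr : 1 ≤ r) (m : ℕ) (hm : 1 ≤ m)
    (N : ℕ) (X : Fin d → Matrix (Fin N) (Fin N) ℂ) (hX : rowNorm X ≤ r)
    (hpm : l2opNorm (freeEval X (p m)) ≤ ((2 * r) ^ (2 ^ m * e m))⁻¹) :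
    (∀ k : ℕ, 1 ≤ k →
        l2opNorm (freeEval X (qProd p e k)) ≤
          r ^ (2 ^ m * e m) * (2 : ℝ) ^ ((2 ^ m * e m : ℤ) - (k : ℤ))) ∧
      ∑' k : ℕ, l2opNorm (freeEval X (qProd p e (k + 1))) ≤
        r ^ (2 ^ m * e m) * 2 ^ (2 ^ m * e m) :=
  stmt9_general d p e he hhom hbd r hr m hm N X hX hpm
end

section
/- For each n ≥ 1, let p_n be a free polynomial in d variables, homogeneous of degree e_n ≥ 1, such that p_n(X) = 0 for every d-tuple X of n×n complex matrices. For k ≥ 1 define q_k = ∏_{n≥1} p_n^{⌊k/(2^n e_n)⌋} (a finite product, since the exponent is 0 once 2^n > k). Then for every m ≥ 1, every d-tuple X of m×m complex matrices, and every k ≥ 2^m e_m, one has q_k(X) = 0. Consequently, for each fixed tuple X the series Σ_{k≥1} q_k(X) has only finitely many nonzero terms. -/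
/-!
The factor `p_m ^ ⌊k / (2^m e_m)⌋` of `q_k` occurs (`m ≤ 2^m ≤ 2^m e_m ≤ k`) with a positive
exponent once `k ≥ 2^m e_m`, and it is killed by evaluation at `m × m` matrices; a product
with a zero factor is zero, in any order.
-/

theorem map_qProd_eq_zero {d : ℕ} {A F : Type*} [Semiring A] [FunLike F (FreePoly d) A]
    [RingHomClass F (FreePoly d) A] (f : F)
    (p : ℕ → FreePoly d) (e : ℕ → ℕ) {n k : ℕ} (hn : 1 ≤ n) (hnk : n ≤ k)
    (hexp : k / (2 ^ n * e n) ≠ 0) (hf : f (p n) = 0) : f (qProd p e k) = 0 := by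
  rw [qProd, map_list_prod]
  apply List.prod_eq_zero
  simp only [List.map_map, List.mem_map, List.mem_range, Function.comp_apply]
  refine ⟨n - 1, by omega, ?_⟩
  rw [Nat.sub_add_cancel hn, map_pow, hf, zero_pow hexp]

theorem le_of_two_pow_mul_le {m c k : ℕ} (hc : 1 ≤ c) (h : 2 ^ m * c ≤ k) : m ≤ k :=
  calc m ≤ 2 ^ m := Nat.lt_two_pow_self.le
    _ ≤ 2 ^ m * c := Nat.le_mul_of_pos_right _ hc
    _ ≤ k := h

theorem stmt10_general (d : ℕ) (p : ℕ → FreePoly d) (e : ℕ → ℕ) (he : ∀ n, 1 ≤ e n)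
    (hvan : ∀ n, 1 ≤ n → ∀ X : Fin d → Matrix (Fin n) (Fin n) ℂ, freeEval X (p n) = 0)
    (m : ℕ) (hm : 1 ≤ m) (X : Fin d → Matrix (Fin m) (Fin m) ℂ) :
    (∀ k : ℕ, 2 ^ m * e m ≤ k → freeEval X (qProd p e k) = 0) ∧
      {k : ℕ | 1 ≤ k ∧ freeEval X (qProd p e k) ≠ 0}.Finite := by
  have vanish (k : ℕ) (hk : 2 ^ m * e m ≤ k) : freeEval X (qProd p e k) = 0 := by
    have hexp : k / (2 ^ m * e m) ≠ 0 :=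
      (Nat.div_pos hk (Nat.mul_pos (Nat.two_pow_pos m) (he m))).ne'
    exact map_qProd_eq_zero (freeEval X) p e hm
      (le_of_two_pow_mul_le (he m) hk) hexp (hvan m hm X)
  exact ⟨vanish, (Set.finite_Iio (2 ^ m * e m)).subset
    fun k hk => lt_of_not_ge fun hle => hk.2 (vanish k hle)⟩

/-- if each p_n (homogeneous of degree e_n ≥ 1) vanishes on all d-tuples of
n×n matrices, then q_k vanishes on all d-tuples of m×m matrices as soon as k ≥ 2^m e_m;
consequently for fixed X only finitely many q_k(X) are nonzero. -/
theorem stmt10 (d : ℕ) (p : ℕ → FreePoly d) (e : ℕ → ℕ) (he : ∀ n, 1 ≤ e n)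
    (hhom : ∀ n, ∀ w ∈ (p n).coeff.support, FreeMonoid.length w = e n)
    (hvan : ∀ n, 1 ≤ n → ∀ X : Fin d → Matrix (Fin n) (Fin n) ℂ, freeEval X (p n) = 0)
    (m : ℕ) (hm : 1 ≤ m) (X : Fin d → Matrix (Fin m) (Fin m) ℂ) :
    (∀ k : ℕ, 2 ^ m * e m ≤ k → freeEval X (qProd p e k) = 0) ∧
      {k : ℕ | 1 ≤ k ∧ freeEval X (qProd p e k) ≠ 0}.Finite :=
  stmt10_general d p e he hvan m hm X
end

section
/- Let d ≥ 2. There exists a sequence (q_k)_{k≥1} of free polynomials in d variables such that: each q_k is homogeneous of degree at most k; ‖q_k‖_{H²} = 1 for every k; and for every m ≥ 1 there exists K such that for all k ≥ K, q_k(X) = 0 for every d-tuple X of m×m complex matrices. -/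
/-!
Take `q_k = s_N(u_0, …, u_{N-1}) / √N!`, where `N = ⌊√k⌋`, `s_N = ∑_σ sign σ x_{σ 0} ⋯ x_{σ (N-1)}`
is the standard polynomial and `u_i = a^i b^(N-i)` for two distinct letters `a, b`. The words
`u_i` are distinct and all of length `N`, so the `N!` concatenations `u_{σ 0} ⋯ u_{σ (N-1)}` are
distinct words of length `N² ≤ k`, each with coefficient `±1`; hence `‖q_k‖_{H²} = 1`. Since
`s_N` is multilinear and alternating, it vanishes on any `N` linearly dependent matrices, in
particular on any `N > m²` matrices of size `m × m`.
-/

open Equiv Finset Function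

theorem List.eq_of_flatten_eq_of_map_length_eq {α : Type*} :
    ∀ {L₁ L₂ : List (List α)}, L₁.map List.length = L₂.map List.length →
      L₁.flatten = L₂.flatten → L₁ = L₂
  | [], [], _, _ => rfl
  | l₁ :: L₁, l₂ :: L₂, hlen, hflat => by
    simp only [List.map_cons, List.cons.injEq] at hlen
    obtain ⟨rfl, hrest⟩ := List.append_inj hflat hlen.1
    rw [List.eq_of_flatten_eq_of_map_length_eq hlen.2 hrest]

namespace FreeMonoid

variable {α : Type*} {N L : ℕ}

theorem length_prod_ofFn_comp_perm {u : Fin N → FreeMonoid α} (hL : ∀ i, (u i).length = L)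
    (σ : Perm (Fin N)) : (List.ofFn (u ∘ σ)).prod.length = N * L := by
  simp only [length] at hL ⊢
  simp [toList_prod, List.length_flatten, List.map_ofFn, Function.comp_def, hL]

theorem prod_ofFn_comp_perm_injective {u : Fin N → FreeMonoid α} (hu : Injective u)
    (hL : ∀ i, (u i).length = L) :
    Injective fun σ : Perm (Fin N) => (List.ofFn (u ∘ σ)).prod := by
  intro σ τ h
  have hflat := congrArg toList h
  simp only [toList_prod, List.map_ofFn] at hflat
  have hlen : ∀ σ : Perm (Fin N), (List.ofFn (toList ∘ u ∘ σ)).map List.length =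
      List.replicate N L := fun σ => by
    simp only [length] at hL
    simp [List.map_ofFn, Function.comp_def, hL, List.ofFn_const]
  have hwords := List.ofFn_inj.mp (List.eq_of_flatten_eq_of_map_length_eq
    ((hlen σ).trans (hlen τ).symm) hflat)
  ext i
  exact congrArg Fin.val (hu (toList.injective (congrFun hwords i)))

def blockWord (a b : α) (N i : ℕ) : FreeMonoid α :=
  ofList (List.replicate i a ++ List.replicate (N - i) b)

theorem length_blockWord (a b : α) {i : ℕ} (h : i ≤ N) : (blockWord a b N i).length = N := by
  simp [blockWord, length, Nat.add_sub_cancel' h]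

theorem blockWord_injective [DecidableEq α] {a b : α} (hab : a ≠ b) :
    Injective (blockWord a b N) := by
  intro i j h
  simpa [blockWord, List.count_replicate, hab.symm] using congrArg (fun w => w.toList.count a) h

end FreeMonoid

open FreeMonoid

section StandardPoly

variable {α : Type*} {N : ℕ}

noncomputable def standardPoly (R : Type*) [CommRing R] (u : Fin N → FreeMonoid α) :
    MonoidAlgebra R (FreeMonoid α) :=
  ∑ σ : Perm (Fin N), MonoidAlgebra.single (List.ofFn (u ∘ σ)).prod ((Perm.sign σ : ℤ) : R)

variable {u : Fin N → FreeMonoid α}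

section CommRing

variable {R : Type*} [CommRing R]

theorem exists_perm_of_mem_support_standardPoly {w : FreeMonoid α}
    (hw : w ∈ (standardPoly R u).coeff.support) :
    ∃ σ : Perm (Fin N), (List.ofFn (u ∘ σ)).prod = w := by
  rw [standardPoly, MonoidAlgebra.coeff_sum] at hw
  obtain ⟨σ, -, hσ⟩ := Finsupp.mem_support_finsetSum w hw
  rw [MonoidAlgebra.coeff_single, Finsupp.mem_support_single] at hσ
  exact ⟨σ, hσ.1.symm⟩

theorem length_of_mem_support_standardPoly {L : ℕ} (hL : ∀ i, (u i).length = L) {w : FreeMonoid α}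
    (hw : w ∈ (standardPoly R u).coeff.support) : w.length = N * L := by
  obtain ⟨σ, rfl⟩ := exists_perm_of_mem_support_standardPoly hw
  exact length_prod_ofFn_comp_perm hL σ

theorem coeff_standardPoly (hu : Injective fun σ : Perm (Fin N) => (List.ofFn (u ∘ σ)).prod)
    (τ : Perm (Fin N)) : (standardPoly R u).coeff (List.ofFn (u ∘ τ)).prod = (Perm.sign τ : ℤ) := by
  classical
  rw [standardPoly, MonoidAlgebra.coeff_sum, Finsupp.finsetSum_apply, sum_eq_single τ]
  · simp [MonoidAlgebra.coeff_single]
  · intro σ _ hστ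
    rw [MonoidAlgebra.coeff_single, Finsupp.single_apply, if_neg (hu.ne hστ)]
  · simp

theorem lift_standardPoly {A : Type*} [Ring A] [Algebra R A] (f : α → A) :
    MonoidAlgebra.lift R A (FreeMonoid α) (FreeMonoid.lift f) (standardPoly R u) =
      MultilinearMap.alternatization (MultilinearMap.mkPiAlgebraFin R N A)
        (FreeMonoid.lift f ∘ u) := by
  rw [standardPoly, map_sum, MultilinearMap.alternatization_apply]
  refine sum_congr rfl fun σ _ => ?_
  rw [MonoidAlgebra.lift_single, map_list_prod, List.map_ofFn,
    MultilinearMap.domDomCongr_apply, MultilinearMap.mkPiAlgebraFin_apply,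
    Int.cast_smul_eq_zsmul, Units.smul_def]
  rfl

end CommRing

theorem lift_standardPoly_eq_zero {K A : Type*} [Field K] [Ring A] [Algebra K A]
    [FiniteDimensional K A] (hN : Module.finrank K A < N) (f : α → A) :
    MonoidAlgebra.lift K A (FreeMonoid α) (FreeMonoid.lift f) (standardPoly K u) = 0 := by
  rw [lift_standardPoly]
  refine AlternatingMap.map_linearDependent _ _ fun hli => ?_
  have := hli.fintype_card_le_finrank
  rw [Fintype.card_fin] at this
  omega

theorem sum_norm_sq_coeff_standardPoly {R : Type*} [NormedCommRing R] [NormOneClass R]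
    (hu : Injective fun σ : Perm (Fin N) => (List.ofFn (u ∘ σ)).prod) :
    ∑ w ∈ (standardPoly R u).coeff.support, ‖(standardPoly R u).coeff w‖ ^ 2 = N.factorial := by
  classical
  have hsub : (standardPoly R u).coeff.support ⊆
      univ.image fun σ : Perm (Fin N) => (List.ofFn (u ∘ σ)).prod :=
    fun w hw => by simpa using exists_perm_of_mem_support_standardPoly hw
  rw [sum_subset hsub fun w _ hw => by simp [Finsupp.notMem_support_iff.1 hw],
    sum_image fun σ _ τ _ h => hu h]
  have hsign (σ : Perm (Fin N)) : ‖((Perm.sign σ : ℤ) : R)‖ = 1 := by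
    rcases Int.units_eq_one_or (Perm.sign σ) with h | h <;> simp [h]
  simp [coeff_standardPoly hu, hsign, Fintype.card_perm]

end StandardPoly

theorem h2Norm_smul {d : ℕ} (c : ℂ) (p : FreePoly d) : h2Norm (c • p) = ‖c‖ * h2Norm p := by
  rcases eq_or_ne c 0 with rfl | hc
  · simp [h2Norm]
  rw [h2Norm, h2Norm, MonoidAlgebra.coeff_smul, Finsupp.support_smul_eq hc]
  simp only [Finsupp.smul_apply, smul_eq_mul, norm_mul, mul_pow, ← mul_sum]
  rw [Real.sqrt_mul (by positivity), Real.sqrt_sq (norm_nonneg c)]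

theorem h2Norm_standardPoly {d N : ℕ} {u : Fin N → FreeMonoid (Fin d)}
    (hu : Injective fun σ : Perm (Fin N) => (List.ofFn (u ∘ σ)).prod) :
    h2Norm (standardPoly ℂ u) = √(N.factorial : ℝ) := by
  rw [h2Norm, sum_norm_sq_coeff_standardPoly hu]

/-- for d ≥ 2 there is a sequence (q_k)_{k≥1} of free polynomials, each
homogeneous of degree at most k with H² norm 1, such that for every matrix size m the
evaluations q_k(X) on m×m tuples vanish for all large k. -/
theorem stmt11 (d : ℕ) (hd : 2 ≤ d) :
    ∃ q : ℕ → FreePoly d,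
      (∀ k, 1 ≤ k → ∃ j ≤ k, ∀ w ∈ (q k).coeff.support, FreeMonoid.length w = j) ∧
      (∀ k, 1 ≤ k → h2Norm (q k) = 1) ∧
      (∀ m : ℕ, 1 ≤ m → ∃ K : ℕ, ∀ k, K ≤ k →
        ∀ X : Fin d → Matrix (Fin m) (Fin m) ℂ, freeEval X (q k) = 0) := by
  let a : Fin d := ⟨0, by omega⟩
  let b : Fin d := ⟨1, by omega⟩
  have hab : a ≠ b := by simp [a, b, Fin.ext_iff]
  let u (N : ℕ) (i : Fin N) : FreeMonoid (Fin d) := blockWord a b N i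
  have hlen (N : ℕ) (i : Fin N) : (u N i).length = N := length_blockWord a b i.is_lt.le
  have hinj (N : ℕ) : Injective fun σ : Perm (Fin N) => (List.ofFn (u N ∘ σ)).prod :=
    prod_ofFn_comp_perm_injective ((blockWord_injective hab).comp Fin.val_injective) (hlen N)
  refine ⟨fun k => (√(k.sqrt.factorial : ℝ) : ℂ)⁻¹ • standardPoly ℂ (u k.sqrt),
    fun k _ => ?_, fun k _ => ?_, fun m _ => ?_⟩
  · exact ⟨k.sqrt * k.sqrt, k.sqrt_le,
      fun w hw => length_of_mem_support_standardPoly (hlen _) (Finsupp.support_smul hw)⟩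
  · rw [h2Norm_smul, h2Norm_standardPoly (hinj _)]
    have hpos : 0 < √(k.sqrt.factorial : ℝ) := by positivity
    simp [abs_of_pos hpos, hpos.ne']
  · refine ⟨(m * m + 1) ^ 2, fun k hk X => ?_⟩
    have hN : m * m < k.sqrt := Nat.le_sqrt.2 (by nlinarith)
    rw [map_smul, freeEval,
      lift_standardPoly_eq_zero (by simpa [Module.finrank_matrix] using hN), smul_zero]
end
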